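/- If β' ≥ β with β, β' ∈ (0,1], then ψ_{β'}(x) ≤ ψ_β(x) for all x ≥ 0; i.e., ψ_β(x) is non-increasing in β. -/

import Mathlib

/-! The base `(1 + x) / (1 + (1 + β) x)` of `φ_β(x)` decreases in `β`, and the exponent `1/x - 1`
is positive on `(0, 1)` and negative on `(1, ∞)`. Hence `φ_β(x)` decreases in `β` for `x < 1` and
increases for `x > 1`; since `ψ_β(x) = (1 - x / φ_β(x)) / (1 - x)`, the sign of `1 - x` turns both
cases into `ψ_β(x)` decreasing in `β`. The points `0` and `1` follow by continuity, as
`(0, 1) ∪ (1, ∞)` is dense in `[0, ∞)`. -/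

open Set

noncomputable def phi (β x : ℝ) : ℝ := ((1 + x) / (1 + (1 + β) * x)) ^ (1 / x - 1)

noncomputable def psi (β x : ℝ) : ℝ := (phi β x - x) / ((1 - x) * phi β x)

section

variable {β β' x : ℝ}

lemma phi_base_pos (hβ : 0 ≤ β) (hx : 0 < x) : 0 < (1 + x) / (1 + (1 + β) * x) :=
  div_pos (by linarith) (by nlinarith)

lemma phi_base_antitone (hβ : 0 ≤ β) (hle : β ≤ β') (hx : 0 < x) :
    (1 + x) / (1 + (1 + β') * x) ≤ (1 + x) / (1 + (1 + β) * x) :=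
  div_le_div_of_nonneg_left (by linarith) (by nlinarith) (by nlinarith)

lemma phi_pos (hβ : 0 ≤ β) (hx : 0 < x) : 0 < phi β x :=
  Real.rpow_pos_of_pos (phi_base_pos hβ hx) _

lemma phi_antitone_of_lt_one (hβ : 0 ≤ β) (hle : β ≤ β') (hx : 0 < x) (hx1 : x < 1) :
    phi β' x ≤ phi β x := by
  have hexp : 0 ≤ 1 / x - 1 := by
    rw [sub_nonneg, le_div_iff₀ hx]
    linarith
  exact Real.rpow_le_rpow (phi_base_pos (hβ.trans hle) hx).le (phi_base_antitone hβ hle hx) hexp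

lemma phi_monotone_of_one_lt (hβ : 0 ≤ β) (hle : β ≤ β') (hx1 : 1 < x) :
    phi β x ≤ phi β' x := by
  have hx : 0 < x := by linarith
  have hexp : 1 / x - 1 ≤ 0 := by
    rw [sub_nonpos, div_le_iff₀ hx]
    linarith
  exact Real.rpow_le_rpow_of_nonpos (phi_base_pos (hβ.trans hle) hx)
    (phi_base_antitone hβ hle hx) hexp

lemma psi_eq_one_sub_div (hβ : 0 ≤ β) (hx : 0 < x) :
    psi β x = (1 - x / phi β x) / (1 - x) := by
  have := (phi_pos hβ hx).ne'
  unfold psi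
  field_simp

lemma psi_antitone (hβ : 0 ≤ β) (hle : β ≤ β') (hx : 0 < x) (hx1 : x ≠ 1) :
    psi β' x ≤ psi β x := by
  have hφ := phi_pos hβ hx
  have hφ' := phi_pos (hβ.trans hle) hx
  rw [psi_eq_one_sub_div hβ hx, psi_eq_one_sub_div (hβ.trans hle) hx]
  rcases hx1.lt_or_gt with hx1 | hx1
  · have := div_le_div_of_nonneg_left hx.le hφ' (phi_antitone_of_lt_one hβ hle hx hx1)
    exact div_le_div_of_nonneg_right (by linarith) (by linarith)
  · have := div_le_div_of_nonneg_left hx.le hφ (phi_monotone_of_one_lt hβ hle hx1)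
    rw [div_le_div_right_of_neg (by linarith)]
    linarith

end

lemma closure_Ioo_zero_one_union_Ioi_one : closure (Ioo (0 : ℝ) 1 ∪ Ioi 1) = Ici 0 := by
  rw [closure_union, closure_Ioo zero_ne_one, closure_Ioi, Icc_union_Ici_eq_Ici zero_le_one]

theorem psi_antitone_in_beta_general (β β' : ℝ) (hβ : β ∈ Set.Ioc (0 : ℝ) 1)
    (hle : β ≤ β') (gβ gβ' : ℝ → ℝ)
    (hgβ_cont : ContinuousOn gβ (Set.Ici (0 : ℝ)))
    (hgβ_eq : ∀ x : ℝ, 0 < x → x ≠ 1 → gβ x = psi β x)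
    (hgβ'_cont : ContinuousOn gβ' (Set.Ici (0 : ℝ)))
    (hgβ'_eq : ∀ x : ℝ, 0 < x → x ≠ 1 → gβ' x = psi β' x) :
    ∀ x : ℝ, 0 ≤ x → gβ' x ≤ gβ x := by
  have off_zero_one : ∀ x ∈ Ioo (0 : ℝ) 1 ∪ Ioi 1, gβ' x ≤ gβ x := by
    rintro x (⟨hx, hx1⟩ | hx1)
    · rw [hgβ_eq x hx hx1.ne, hgβ'_eq x hx hx1.ne]
      exact psi_antitone hβ.1.le hle hx hx1.ne
    · have hx : (0 : ℝ) < x := zero_lt_one.trans hx1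
      rw [hgβ_eq x hx hx1.ne', hgβ'_eq x hx hx1.ne']
      exact psi_antitone hβ.1.le hle hx hx1.ne'
  intro x (hx : x ∈ Ici 0)
  rw [← closure_Ioo_zero_one_union_Ioi_one] at hgβ_cont hgβ'_cont hx
  exact le_on_closure off_zero_one hgβ'_cont hgβ_cont hx

theorem psi_antitone_in_beta (β β' : ℝ) (hβ : β ∈ Set.Ioc (0 : ℝ) 1)
    (hβ' : β' ∈ Set.Ioc (0 : ℝ) 1) (hle : β ≤ β') (gβ gβ' : ℝ → ℝ)
    (hgβ_cont : ContinuousOn gβ (Set.Ici (0 : ℝ)))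
    (hgβ_eq : ∀ x : ℝ, 0 < x → x ≠ 1 → gβ x = psi β x)
    (hgβ'_cont : ContinuousOn gβ' (Set.Ici (0 : ℝ)))
    (hgβ'_eq : ∀ x : ℝ, 0 < x → x ≠ 1 → gβ' x = psi β' x) :
    ∀ x : ℝ, 0 ≤ x → gβ' x ≤ gβ x :=
  psi_antitone_in_beta_general β β' hβ hle gβ gβ' hgβ_cont hgβ_eq hgβ'_cont hgβ'_eq
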